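/- arXiv:0909.4417 — 6 statements merged into one kernel-verified Lean document; each statement's English description precedes it below -/
import Mathlib

section
/- For all n and r, B_{n,r}(x) = \sum_{k=0}^n r^k \binom{n}{k} B_{n-k}(x), where B_m(x) is the ordinary Bell polynomial. -/
/-- `rS r n k` is the r-Stirling number of the second kind `S_r(n+r, k+r)`. -/
def rS (r : ℕ) : ℕ → ℕ → ℕ
  | 0, 0 => 1
  | 0, _ + 1 => 0
  | n + 1, 0 => r * rS r n 0
  | n + 1, k + 1 => (k + 1 + r) * rS r n (k + 1) + rS r n k

/-- The r-Stirling number of the second kind `S_r(n,k)`. -/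
def rStirling (r n k : ℕ) : ℕ :=
  if r ≤ n ∧ r ≤ k then rS r (n - r) (k - r) else 0

/-- The r-Bell polynomial `B_{n,r}(x)` as a real function. -/
def rBellPoly (r n : ℕ) (x : ℝ) : ℝ :=
  ∑ k ∈ Finset.range (n + 1), (rS r n k : ℝ) * x ^ k

/-- The r-Bell number `B_{n,r}`. -/
def rBell (r n : ℕ) : ℕ :=
  ∑ k ∈ Finset.range (n + 1), rS r n k

lemma rS_pow (r : ℕ) : ∀ n, rS r n 0 = r ^ n
  | 0 => rfl
  | n + 1 => by rw [rS, rS_pow r n, pow_succ, mul_comm]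

lemma rS_eq_zero (r : ℕ) : ∀ n j, n < j → rS r n j = 0
  | 0, j + 1, _ => rfl
  | n + 1, j + 1, h => by
    rw [rS, rS_eq_zero r n (j + 1) (by omega), rS_eq_zero r n j (by omega)]
    simp

lemma rS_key (r : ℕ) : ∀ n j, rS r n j =
    ∑ k ∈ Finset.range (n + 1), r ^ k * n.choose k * rS 0 (n - k) j := by
  intro n
  induction n with
  | zero => intro j; cases j <;> simp [rS]
  | succ n ih =>
    intro j
    cases j with
    | zero =>
      rw [Finset.sum_range_succ, rS_pow]
      have h0 : ∀ k ∈ Finset.range (n + 1),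
          r ^ k * (n + 1).choose k * rS 0 (n + 1 - k) 0 = 0 := by
        intro k hk
        have hk' : k ≤ n := by simpa [Nat.lt_succ_iff] using hk
        have : n + 1 - k = (n - k) + 1 := by omega
        rw [this, rS_pow]
        simp
      rw [Finset.sum_eq_zero h0]
      simp [rS_pow]
    | succ j =>
      have expand : (∑ k ∈ Finset.range (n + 1 + 1),
            r ^ k * (n + 1).choose k * rS 0 (n + 1 - k) (j + 1)) =
          (∑ k ∈ Finset.range (n + 1), r ^ k * n.choose k * rS 0 (n + 1 - k) (j + 1)) +
          r * (∑ k ∈ Finset.range (n + 1), r ^ k * n.choose k * rS 0 (n - k) (j + 1)) := by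
        rw [Finset.sum_range_succ'
              (fun k => r ^ k * (n + 1).choose k * rS 0 (n + 1 - k) (j + 1)) (n + 1),
            Finset.sum_range_succ'
              (fun k => r ^ k * n.choose k * rS 0 (n + 1 - k) (j + 1)) n, Finset.mul_sum]
        have h1 : ∀ k ∈ Finset.range (n + 1),
            r ^ (k + 1) * (n + 1).choose (k + 1) * rS 0 (n + 1 - (k + 1)) (j + 1) =
            r ^ (k + 1) * n.choose (k + 1) * rS 0 (n - k) (j + 1) +
            r * (r ^ k * n.choose k * rS 0 (n - k) (j + 1)) := by
          intro k hk
          have : n + 1 - (k + 1) = n - k := by omega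
          rw [this, Nat.choose_succ_succ]
          ring
        rw [Finset.sum_congr rfl h1, Finset.sum_add_distrib]
        have h2 : (∑ k ∈ Finset.range (n + 1),
            r ^ (k + 1) * n.choose (k + 1) * rS 0 (n - k) (j + 1)) =
            ∑ k ∈ Finset.range n, r ^ (k + 1) * n.choose (k + 1) * rS 0 (n - k) (j + 1) := by
          rw [Finset.sum_range_succ, Nat.choose_succ_self]
          simp
        rw [h2]
        simp only [pow_zero, Nat.choose_zero_right, Nat.sub_zero, Nat.choose_succ_succ,
          Nat.choose_zero_right]
        push_cast
        ring
      rw [expand]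
      have h3 : ∀ k ∈ Finset.range (n + 1),
          r ^ k * n.choose k * rS 0 (n + 1 - k) (j + 1) =
          (j + 1) * (r ^ k * n.choose k * rS 0 (n - k) (j + 1)) +
          r ^ k * n.choose k * rS 0 (n - k) j := by
        intro k hk
        have hk' : k ≤ n := by simpa [Nat.lt_succ_iff] using hk
        have h4 : n + 1 - k = (n - k) + 1 := by omega
        rw [h4]
        show r ^ k * n.choose k * ((j + 1 + 0) * rS 0 (n - k) (j + 1) + rS 0 (n - k) j) = _
        ring
      rw [Finset.sum_congr rfl h3, Finset.sum_add_distrib, ← Finset.mul_sum, ← ih, ← ih]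
      show (j + 1 + r) * rS r n (j + 1) + rS r n j = _
      ring

theorem rBellPoly_eq_sum_bellPoly (n r : ℕ) (x : ℝ) :
    rBellPoly r n x =
      ∑ k ∈ Finset.range (n + 1), (r : ℝ) ^ k * (n.choose k : ℝ) * rBellPoly 0 (n - k) x := by
  unfold rBellPoly
  have : ∀ k ∈ Finset.range (n + 1),
      (r : ℝ) ^ k * (n.choose k : ℝ) *
        (∑ j ∈ Finset.range (n - k + 1), (rS 0 (n - k) j : ℝ) * x ^ j) =
      ∑ j ∈ Finset.range (n + 1),
        (r : ℝ) ^ k * (n.choose k : ℝ) * ((rS 0 (n - k) j : ℝ) * x ^ j) := by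
    intro k hk
    rw [Finset.mul_sum]
    apply Finset.sum_subset
    · intro j hj
      simp only [Finset.mem_range] at *
      omega
    · intro j hj hj'
      simp only [Finset.mem_range, not_lt] at *
      rw [rS_eq_zero 0 (n - k) j (by omega)]
      simp
  rw [Finset.sum_congr rfl this, Finset.sum_comm]
  apply Finset.sum_congr rfl
  intro j hj
  rw [rS_key]
  push_cast
  rw [Finset.sum_mul]
  apply Finset.sum_congr rfl
  intro k hk
  ring
end

section
/- All roots of the r-Bell polynomial B_{n,r}(x) are real and nonpositive. -/
/-! For `r > 0` the recurrence reads `B_{n+1,r} = x B_{n,r}' + (x + r) B_{n,r}`. If `B_{n,r}` has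
`n` simple negative roots `x₀ > ⋯ > x_{n-1}`, then `B_{n+1,r}(x_j) = x_j B_{n,r}'(x_j)` has the sign
`(-1)^(j+1)`, while `B_{n+1,r}(0) = r B_{n,r}(0) > 0` and `B_{n+1,r}` has the sign `(-1)^(n+1)` near
`-∞`. The intermediate value theorem therefore gives `n + 1` simple negative roots of `B_{n+1,r}`,
which are all of its roots. The case `r = 0` reduces to `r = 1` through `B_{n+1,0} = x B_{n,1}`. -/

open Polynomial Finset Filter Asymptotics Lagrange

lemma isMonicOfDegree_nodal {ι R : Type*} [CommRing R] [Nontrivial R] (s : Finset ι) (v : ι → R) :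
    IsMonicOfDegree (nodal s v) #s :=
  ⟨natDegree_nodal, nodal_monic⟩

lemma Polynomial.IsMonicOfDegree.eq_nodal {ι R : Type*} [Fintype ι] [CommRing R] [IsDomain R]
    {p : R[X]} (hp : IsMonicOfDegree p (Fintype.card ι)) {v : ι → R} (hv : Function.Injective v)
    (hroot : ∀ i, p.eval (v i) = 0) : p = nodal univ v := by
  rcases eq_or_ne (Fintype.card ι) 0 with h | h
  · rw [h, isMonicOfDegree_zero_iff] at hp
    rw [hp, univ_eq_empty_iff.2 (Fintype.card_eq_zero_iff.1 h), nodal_empty]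
  · refine sub_eq_zero.1 (eq_zero_of_natDegree_lt_card_of_eval_eq_zero _ hv (fun i => ?_) ?_)
    · rw [eval_sub, hroot, eval_nodal_at_node (mem_univ i), sub_zero]
    · exact hp.natDegree_sub_lt h (isMonicOfDegree_nodal univ v)

lemma StrictAnti.neg_one_pow_mul_eval_derivative_nodal_pos {n : ℕ} {x : Fin n → ℝ}
    (hx : StrictAnti x) (j : Fin n) :
    0 < (-1) ^ (j : ℕ) * (derivative (nodal univ x)).eval (x j) := by
  have hsplit : univ.erase j = Iio j ∪ Ioi j := by
    ext k
    simp [lt_or_lt_iff_ne, ne_comm]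
  rw [eval_nodal_derivative_eval_node_eq (mem_univ j), eval_nodal, hsplit,
    prod_union (disjoint_left.2 fun k hk hk' => (mem_Iio.1 hk).asymm (mem_Ioi.1 hk')),
    ← mul_assoc, ← Fin.card_Iio j, ← prod_neg]
  refine mul_pos (prod_pos fun k hk => ?_) (prod_pos fun k hk => ?_)
  · linarith [hx (mem_Iio.1 hk)]
  · linarith [hx (mem_Ioi.1 hk)]

lemma eventually_atBot_pos_neg_one_pow_mul_eval {P : ℝ[X]} (hP : 0 < P.leadingCoeff) :
    ∀ᶠ t in atBot, 0 < (-1) ^ P.natDegree * P.eval t := by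
  have h : (fun t => (-1) ^ P.natDegree * P.eval t) ~[atBot]
      fun t => (-1) ^ P.natDegree * (P.leadingCoeff * t ^ P.natDegree) :=
    IsEquivalent.refl.mul P.isEquivalent_atBot_lead
  refine h.eventually_pos ((eventually_lt_atBot 0).mono fun t ht => ?_)
  rw [mul_left_comm, ← mul_pow]
  exact mul_pos hP (pow_pos (by linarith) _)

theorem exists_strictAnti_zeros_of_alternating {m : ℕ} {f : ℝ → ℝ} (hf : Continuous f)
    {N : Fin (m + 1) → ℝ} (hN : StrictAnti N)
    (hsign : ∀ i : Fin (m + 1), 0 < (-1) ^ (i : ℕ) * f (N i)) :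
    ∃ y : Fin m → ℝ, StrictAnti y ∧ (∀ j, y j < N 0) ∧ ∀ j, f (y j) = 0 := by
  have hzero : ∀ j : Fin m, ∃ y ∈ Set.Ioo (N j.succ) (N j.castSucc), f y = 0 := by
    intro j
    have hsucc := hsign j.succ
    rw [Fin.val_succ, pow_succ, mul_neg_one, neg_mul] at hsucc
    obtain ⟨y, hy, hfy⟩ := intermediate_value_Ioo (hN Fin.castSucc_lt_succ).le
      (by fun_prop : Continuous fun t => (-1) ^ (j : ℕ) * f t).continuousOn
      (⟨by linarith, hsign j.castSucc⟩ : (0 : ℝ) ∈ Set.Ioo _ _)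
    exact ⟨y, hy, (mul_eq_zero.1 hfy).resolve_left (pow_ne_zero _ (by norm_num))⟩
  choose y hyN hy using hzero
  refine ⟨y, fun i k hik => ?_, fun j => (hyN j).2.trans_le (hN.antitone (Fin.zero_le _)), hy⟩
  calc y k < N k.castSucc := (hyN k).2
    _ ≤ N i.succ := hN.antitone (Fin.succ_le_castSucc_iff.2 hik)
    _ < y i := (hyN i).1

lemma Fin.strictAnti_cons_snoc {α : Type*} [Preorder α] {n : ℕ} {x : Fin n → α} {a b : α}
    (hx : StrictAnti x) (hxa : ∀ i, x i < a) (hbx : ∀ i, b < x i) (hba : b < a) :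
    StrictAnti (Fin.cons a (Fin.snoc x b) : Fin (n + 2) → α) := by
  have hsnoc : StrictAnti (Fin.snoc x b : Fin (n + 1) → α) := by
    intro i k hik
    induction k using Fin.lastCases with
    | last =>
      obtain ⟨i, rfl⟩ := Fin.exists_castSucc_eq.2 hik.ne
      simpa using hbx i
    | cast k =>
      obtain ⟨i, rfl⟩ := Fin.exists_castSucc_eq.2 (hik.trans (Fin.castSucc_lt_last k)).ne
      simpa using hx (Fin.castSucc_lt_castSucc_iff.1 hik)
  have hsnoc_lt : ∀ i, (Fin.snoc x b : Fin (n + 1) → α) i < a :=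
    Fin.lastCases (by simpa using hba) fun i => by simpa using hxa i
  refine Fin.strictAnti_iff_succ_lt.2 fun i => ?_
  induction i using Fin.cases with
  | zero => exact hsnoc_lt 0
  | succ i => simpa [← Fin.succ_castSucc] using hsnoc (Fin.castSucc_lt_succ (i := i))

lemma rS_eq_zero_of_lt (r : ℕ) : ∀ {n k : ℕ}, n < k → rS r n k = 0
  | 0, _ + 1, _ => rfl
  | n + 1, k + 1, h => by
    rw [rS.eq_4, rS_eq_zero_of_lt r (by omega : n < k + 1), rS_eq_zero_of_lt r (by omega : n < k),
      mul_zero, add_zero]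

lemma rS_zero_succ_succ (n k : ℕ) : rS 0 (n + 1) (k + 1) = rS 1 n k := by
  induction n generalizing k with
  | zero => cases k <;> rfl
  | succ n ih =>
    cases k with
    | zero => rw [rS.eq_4, rS.eq_3, rS.eq_3, ih]; ring
    | succ k => rw [rS.eq_4 0 (n + 1) (k + 1), rS.eq_4 1 n k, ih, ih]

noncomputable def rBellPolynomial (r n : ℕ) : ℝ[X] :=
  ∑ k ∈ range (n + 1), C (rS r n k : ℝ) * X ^ k

lemma coeff_rBellPolynomial (r n k : ℕ) : (rBellPolynomial r n).coeff k = rS r n k := by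
  simp only [rBellPolynomial, finsetSum_coeff, coeff_C_mul_X_pow, sum_ite_eq, mem_range]
  split_ifs with h
  · rfl
  · rw [rS_eq_zero_of_lt r (by omega), Nat.cast_zero]

/-- `rBellOp s P = X P' + (X + s) P`, so that `e^x x^s · rBellOp s P = x (d/dx) (e^x x^s P)`. -/
noncomputable def rBellOp (s : ℝ) (P : ℝ[X]) : ℝ[X] :=
  X * derivative P + (X + C s) * P

lemma rBellPolynomial_succ (r n : ℕ) :
    rBellPolynomial r (n + 1) = rBellOp r (rBellPolynomial r n) := by
  ext (_ | k)
  · simp [rBellOp, coeff_rBellPolynomial, rS]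
  · simp only [rBellOp, coeff_add, coeff_X_mul, coeff_derivative, add_mul, one_mul, map_natCast,
      coeff_natCast_mul, coeff_rBellPolynomial, rS, Nat.cast_add, Nat.cast_mul]
    ring

lemma rBellPolynomial_zero_succ (n : ℕ) :
    rBellPolynomial 0 (n + 1) = X * rBellPolynomial 1 n := by
  ext (_ | k)
  · simp [coeff_rBellPolynomial, rS]
  · simp [coeff_X_mul, coeff_rBellPolynomial, rS_zero_succ_succ]

lemma aeval_rBellPolynomial (r n : ℕ) (z : ℂ) :
    aeval z (rBellPolynomial r n) = ∑ k ∈ range (n + 1), (rS r n k : ℂ) * z ^ k := by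
  simp [rBellPolynomial]

lemma isMonicOfDegree_rBellOp {P : ℝ[X]} {n : ℕ} (hP : IsMonicOfDegree P n) (s : ℝ) :
    IsMonicOfDegree (rBellOp s P) (n + 1) := by
  have hlead : IsMonicOfDegree ((X + C s) * P) (n + 1) := by
    simpa [add_comm] using (isMonicOfDegree_X_add_one s).mul hP
  refine hlead.add_left ?_
  rcases n with _ | n
  · simp [derivative_of_natDegree_zero hP.natDegree_eq]
  · calc (X * derivative P).natDegree ≤ 1 + (n + 1 - 1) :=
          natDegree_mul_le_of_le natDegree_X_le (hP.natDegree_eq ▸ natDegree_derivative_le P)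
      _ < n + 1 + 1 := by omega

lemma eval_rBellOp_of_isRoot {P : ℝ[X]} {x : ℝ} (hx : P.IsRoot x) (s : ℝ) :
    (rBellOp s P).eval x = x * (derivative P).eval x := by
  simp [rBellOp, hx.eq_zero]

lemma eval_zero_rBellOp_nodal_pos {n : ℕ} {s : ℝ} (hs : 0 < s) {x : Fin n → ℝ}
    (hneg : ∀ i, x i < 0) : 0 < (rBellOp s (nodal univ x)).eval 0 := by
  have hP0 : 0 < (nodal univ x).eval 0 := by
    simpa [eval_nodal] using prod_pos fun i _ => neg_pos.2 (hneg i)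
  simpa [rBellOp] using mul_pos hs hP0

lemma StrictAnti.neg_one_pow_succ_mul_eval_rBellOp_nodal_pos {n : ℕ} {x : Fin n → ℝ}
    (hx : StrictAnti x) (hneg : ∀ i, x i < 0) (s : ℝ) (j : Fin n) :
    0 < (-1) ^ ((j : ℕ) + 1) * (rBellOp s (nodal univ x)).eval (x j) := by
  rw [eval_rBellOp_of_isRoot (eval_nodal_at_node (mem_univ j))]
  calc 0 < -x j * ((-1) ^ (j : ℕ) * (derivative (nodal univ x)).eval (x j)) :=
        mul_pos (neg_pos.2 (hneg j)) (hx.neg_one_pow_mul_eval_derivative_nodal_pos j)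
    _ = _ := by ring

theorem exists_strictAnti_neg_rBellOp_nodal_eq {n : ℕ} {s : ℝ} (hs : 0 < s) {x : Fin n → ℝ}
    (hx : StrictAnti x) (hneg : ∀ i, x i < 0) :
    ∃ y : Fin (n + 1) → ℝ, StrictAnti y ∧ (∀ j, y j < 0) ∧
      rBellOp s (nodal univ x) = nodal univ y := by
  set Q := rBellOp s (nodal univ x)
  have hQ : IsMonicOfDegree Q (Fintype.card (Fin (n + 1))) := by
    simpa using isMonicOfDegree_rBellOp (isMonicOfDegree_nodal univ x) s
  obtain ⟨t, htQ, ht0, htx⟩ : ∃ t, 0 < (-1) ^ (n + 1) * Q.eval t ∧ t < 0 ∧ ∀ i, t < x i := by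
    have hpos := eventually_atBot_pos_neg_one_pow_mul_eval (P := Q) (by
      rw [hQ.leadingCoeff_eq]; exact one_pos)
    rw [hQ.natDegree_eq, Fintype.card_fin] at hpos
    exact (hpos.and ((eventually_lt_atBot 0).and
      (eventually_all.2 fun i => eventually_lt_atBot (x i)))).exists
  have hsign : ∀ i : Fin (n + 2),
      0 < (-1) ^ (i : ℕ) * Q.eval ((Fin.cons 0 (Fin.snoc x t) : Fin (n + 2) → ℝ) i) := by
    refine Fin.cases ?_ fun i => Fin.lastCases ?_ (fun j => ?_) i
    · simpa using eval_zero_rBellOp_nodal_pos hs hneg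
    · simpa using htQ
    · simpa using hx.neg_one_pow_succ_mul_eval_rBellOp_nodal_pos hneg s j
  obtain ⟨y, hy, hy0, hroot⟩ := exists_strictAnti_zeros_of_alternating Q.continuous
    (Fin.strictAnti_cons_snoc hx hneg htx ht0) hsign
  exact ⟨y, hy, hy0, hQ.eq_nodal hy.injective hroot⟩

theorem exists_strictAnti_neg_rBellPolynomial_eq_nodal {r : ℕ} (hr : 0 < r) :
    ∀ n, ∃ x : Fin n → ℝ, StrictAnti x ∧ (∀ i, x i < 0) ∧ rBellPolynomial r n = nodal univ x
  | 0 => ⟨Fin.elim0, fun i => i.elim0, fun i => i.elim0, by simp [rBellPolynomial, rS]⟩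
  | n + 1 => by
    obtain ⟨x, hx, hneg, hB⟩ := exists_strictAnti_neg_rBellPolynomial_eq_nodal hr n
    rw [rBellPolynomial_succ, hB]
    exact exists_strictAnti_neg_rBellOp_nodal_eq (Nat.cast_pos.2 hr) hx hneg

theorem exists_nonpos_rBellPolynomial_eq_nodal (r n : ℕ) :
    ∃ (m : ℕ) (x : Fin m → ℝ), (∀ i, x i ≤ 0) ∧ rBellPolynomial r n = nodal univ x := by
  rcases Nat.eq_zero_or_pos r with rfl | hr
  · cases n with
    | zero => exact ⟨0, Fin.elim0, fun i => i.elim0, by simp [rBellPolynomial, rS]⟩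
    | succ n =>
      obtain ⟨x, -, hneg, hB⟩ := exists_strictAnti_neg_rBellPolynomial_eq_nodal one_pos n
      refine ⟨n + 1, Fin.cons 0 x, Fin.cases le_rfl fun i => (hneg i).le, ?_⟩
      simp [rBellPolynomial_zero_succ, hB, nodal, Fin.prod_univ_succ]
  · obtain ⟨x, -, hneg, hB⟩ := exists_strictAnti_neg_rBellPolynomial_eq_nodal hr n
    exact ⟨n, x, fun i => (hneg i).le, hB⟩

theorem rBellPoly_roots_real_nonpos (n r : ℕ) (z : ℂ)
    (hz : ∑ k ∈ Finset.range (n + 1), (rS r n k : ℂ) * z ^ k = 0) :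
    z.im = 0 ∧ z.re ≤ 0 := by
  obtain ⟨m, x, hx, hB⟩ := exists_nonpos_rBellPolynomial_eq_nodal r n
  have hroot : aeval z (nodal univ x) = 0 := by rw [← hB, aeval_rBellPolynomial, hz]
  obtain ⟨i, -, hi⟩ := prod_eq_zero_iff.1 (by simpa [nodal, map_prod] using hroot)
  rw [sub_eq_zero.1 hi]
  exact ⟨Complex.ofReal_im _, by simpa using hx i⟩
end

section
/- For a fixed m \ge r \ge 0, the ordinary generating function identity \sum_{n\ge 0} S_r(n, m) z^n = z^m / ((1-rz)(1-(r+1)z)\cdots(1-mz)) holds as formal power series. -/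
/-!
Multiplying the generating function of `S_r(·, m)` by `1 - m z` turns the recurrence
`S_r(n+1, m) = m S_r(n, m) + S_r(n, m-1)` into `z` times the generating function of
`S_r(·, m-1)`; at the bottom `m = r` one has `S_r(n, r) = r^(n-r)`, whose generating function is
`z^r / (1 - r z)`. Induction on `m` from `r` gives the product formula.
-/

open PowerSeries

theorem rS_zero_right (r n : ℕ) : rS r n 0 = r ^ n := by
  induction n with
  | zero => rfl
  | succ n ih => rw [rS, ih, pow_succ, mul_comm]

theorem rStirling_self (r n : ℕ) : rStirling r n r = if r ≤ n then r ^ (n - r) else 0 := by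
  simp [rStirling, rS_zero_right]

theorem rStirling_add_add (r n k : ℕ) : rStirling r (n + r) (k + r) = rS r n k := by
  simp [rStirling]

theorem rStirling_eq_zero_of_lt_left {r n : ℕ} (k : ℕ) (h : n < r) : rStirling r n k = 0 := by
  simp [rStirling, Nat.not_le.mpr h]

theorem rStirling_eq_zero_of_le_of_lt {r n k : ℕ} (hn : n ≤ r) (hk : r < k) :
    rStirling r n k = 0 := by
  rcases hn.lt_or_eq with hn | rfl
  · exact rStirling_eq_zero_of_lt_left k hn
  · rw [rStirling, if_pos ⟨le_rfl, hk.le⟩, Nat.sub_self,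
      ← Nat.succ_pred_eq_of_pos (Nat.sub_pos_of_lt hk), rS]

theorem rStirling_succ_succ (r m n : ℕ) (h : r ≤ m) :
    rStirling r (n + 1) (m + 1) = (m + 1) * rStirling r n (m + 1) + rStirling r n m := by
  rcases Nat.lt_or_ge n r with hn | hn
  · rw [rStirling_eq_zero_of_le_of_lt hn (Nat.lt_succ_of_le h), rStirling_eq_zero_of_lt_left _ hn,
      rStirling_eq_zero_of_lt_left _ hn, mul_zero]
  · obtain ⟨n, rfl⟩ := Nat.exists_eq_add_of_le' hn
    obtain ⟨k, rfl⟩ := Nat.exists_eq_add_of_le' h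
    rw [Nat.add_right_comm n, Nat.add_right_comm k, rStirling_add_add, rStirling_add_add,
      rStirling_add_add, rS]

section OneSubCMulX

variable {R : Type*} [CommRing R]

theorem coeff_zero_mul_one_sub_C_mul_X (a : R) (φ : R⟦X⟧) :
    coeff 0 (φ * (1 - C a * X)) = coeff 0 φ := by
  rw [mul_sub, mul_one, mul_left_comm, map_sub, coeff_C_mul, coeff_zero_mul_X, mul_zero, sub_zero]

theorem coeff_succ_mul_one_sub_C_mul_X (a : R) (φ : R⟦X⟧) (n : ℕ) :
    coeff (n + 1) (φ * (1 - C a * X)) = coeff (n + 1) φ - a * coeff n φ := by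
  rw [mul_sub, mul_one, mul_left_comm, map_sub, coeff_C_mul, coeff_succ_mul_X]

end OneSubCMulX

theorem mk_rStirling_self_mul (r : ℕ) :
    mk (fun n => (rStirling r n r : ℚ)) * (1 - C (r : ℚ) * X) = X ^ r := by
  ext n
  cases n with
  | zero =>
    rw [coeff_zero_mul_one_sub_C_mul_X, coeff_mk, coeff_X_pow, rStirling_self]
    rcases Nat.eq_zero_or_pos r with rfl | hr
    · simp
    · simp [hr.ne, Nat.not_le.mpr hr]
  | succ n =>
    rw [coeff_succ_mul_one_sub_C_mul_X, coeff_mk, coeff_mk, coeff_X_pow, rStirling_self,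
      rStirling_self]
    rcases Nat.lt_trichotomy (n + 1) r with hlt | rfl | hgt
    · simp [Nat.not_le.mpr hlt, Nat.not_le.mpr (Nat.lt_of_succ_lt hlt), hlt.ne]
    · simp
    · have hrn : r ≤ n := Nat.le_of_lt_succ hgt
      rw [if_pos hgt.le, if_pos hrn, if_neg hgt.ne', Nat.sub_add_comm hrn]
      push_cast
      ring

theorem mk_rStirling_succ_mul (r m : ℕ) (h : r ≤ m) :
    mk (fun n => (rStirling r n (m + 1) : ℚ)) * (1 - C ((m + 1 : ℕ) : ℚ) * X) =
      X * mk (fun n => (rStirling r n m : ℚ)) := by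
  ext n
  cases n with
  | zero =>
    simp [rStirling_eq_zero_of_le_of_lt (Nat.zero_le r) (Nat.lt_succ_of_le h)]
  | succ n =>
    rw [coeff_succ_mul_one_sub_C_mul_X, coeff_mk, coeff_mk, coeff_succ_X_mul, coeff_mk,
      rStirling_succ_succ r m n h]
    push_cast
    ring

theorem mk_rStirling_mul_prod (r m : ℕ) (h : r ≤ m) :
    mk (fun n => (rStirling r n m : ℚ)) * ∏ i ∈ Finset.Icc r m, (1 - C (i : ℚ) * X) = X ^ m := by
  induction m, h using Nat.le_induction with
  | base => simpa using mk_rStirling_self_mul r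
  | succ m hm ih =>
    rw [← Finset.insert_Icc_right_eq_Icc_add_one (by omega), Finset.prod_insert (by simp),
      ← mul_assoc, mk_rStirling_succ_mul r m hm, mul_assoc, ih, pow_succ, mul_comm]

theorem rStirling_ogf (m r : ℕ) (h : r ≤ m) :
    PowerSeries.mk (fun n => (rStirling r n m : ℚ)) =
      PowerSeries.X ^ m *
        (∏ i ∈ Finset.Icc r m, (1 - PowerSeries.C (i : ℚ) * PowerSeries.X))⁻¹ := by
  rw [PowerSeries.eq_mul_inv_iff_mul_eq, mk_rStirling_mul_prod r m h]
  simp [map_prod]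
end

section
/- For every r \ge 0 the sequence of r-Bell numbers is log-convex: B_{n-1,r} B_{n+1,r} \ge B_{n,r}^2 for all n \ge 1. -/
open Finset Filter Topology

lemma mul_descFactorial (k j : ℕ) :
    k * k.descFactorial j = k.descFactorial (j + 1) + j * k.descFactorial j := by
  rcases le_or_gt j k with h | h
  · rw [Nat.descFactorial_succ]
    have : k - j + j = k := Nat.sub_add_cancel h
    nlinarith [Nat.sub_add_cancel h]
  · rw [Nat.descFactorial_eq_zero_iff_lt.2 h,
      Nat.descFactorial_eq_zero_iff_lt.2 (Nat.lt_succ_of_lt h)]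
    simp

lemma rS_poly_nat (r n k : ℕ) :
    (k + r) ^ n = ∑ j ∈ range (n + 1), rS r n j * k.descFactorial j := by
  induction n with
  | zero => simp [rS]
  | succ n ih =>
    have expand : (k + r) ^ (n + 1)
        = ∑ j ∈ range (n + 1),
            (rS r n j * k.descFactorial (j + 1) + (j + r) * (rS r n j * k.descFactorial j)) := by
      rw [pow_succ, ih, Finset.sum_mul]
      refine Finset.sum_congr rfl fun j _ => ?_
      have h := mul_descFactorial k j
      calc rS r n j * k.descFactorial j * (k + r)
          = rS r n j * (k * k.descFactorial j) + r * (rS r n j * k.descFactorial j) := by ring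
        _ = rS r n j * (k.descFactorial (j + 1) + j * k.descFactorial j)
              + r * (rS r n j * k.descFactorial j) := by rw [h]
        _ = rS r n j * k.descFactorial (j + 1) + (j + r) * (rS r n j * k.descFactorial j) := by
              ring
    rw [expand, Finset.sum_add_distrib]
    -- RHS: split using sum_range_succ' (peel off j = 0)
    rw [Finset.sum_range_succ' (fun j => rS r (n + 1) j * k.descFactorial j)]
    have h0 : rS r (n + 1) 0 * k.descFactorial 0 = r * rS r n 0 := by simp [rS]
    rw [h0]
    have h1 : ∀ j ∈ range (n + 1), rS r (n + 1) (j + 1) * k.descFactorial (j + 1)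
        = rS r n (j + 1) * ((j + 1 + r) * k.descFactorial (j + 1))
          + rS r n j * k.descFactorial (j + 1) := by
      intro j _
      show ((j + 1 + r) * rS r n (j + 1) + rS r n j) * k.descFactorial (j + 1) = _
      ring
    rw [Finset.sum_congr rfl h1, Finset.sum_add_distrib]
    -- now compare term by term
    have lhs1 : ∑ j ∈ range (n + 1), (j + r) * (rS r n j * k.descFactorial j)
        = (∑ j ∈ range n, (j + 1 + r) * (rS r n (j + 1) * k.descFactorial (j + 1)))
          + r * rS r n 0 := by
      rw [Finset.sum_range_succ' (fun j => (j + r) * (rS r n j * k.descFactorial j))]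
      simp
    have h2 : ∑ j ∈ range (n + 1), rS r n (j + 1) * ((j + 1 + r) * k.descFactorial (j + 1))
        = ∑ j ∈ range n, (j + 1 + r) * (rS r n (j + 1) * k.descFactorial (j + 1)) := by
      rw [Finset.sum_range_succ]
      have : rS r n (n + 1) = 0 := by
        clear lhs1
        induction n with
        | zero => simp [rS]
        | succ m ihm =>
          show (m + 1 + 1 + r) * rS r m (m + 1 + 1) + rS r m (m + 1) = 0
          have z2 : rS r m (m + 2) = 0 := by
            clear ihm
            induction m with
            | zero => simp [rS]
            | succ p ihp =>
              show (p + 2 + 1 + r) * rS r p (p + 2 + 1) + rS r p (p + 2) = 0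
              have : ∀ q t, q + 1 ≤ t → rS r q t = 0 := by
                intro q
                induction q with
                | zero => intro t ht; match t, ht with
                  | t + 1, _ => simp [rS]
                | succ q ihq =>
                  intro t ht
                  match t, ht with
                  | t + 1, ht =>
                    show (t + 1 + r) * rS r q (t + 1) + rS r q t = 0
                    rw [ihq (t + 1) (by omega), ihq t (by omega)]
                    simp
              rw [this p (p + 3) (by omega), this p (p + 2) (by omega)]
              simp
          have z1 : rS r m (m + 1) = 0 := by
            have : ∀ q t, q + 1 ≤ t → rS r q t = 0 := by
              intro q
              induction q with
              | zero => intro t ht; match t, ht with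
                | t + 1, _ => simp [rS]
              | succ q ihq =>
                intro t ht
                match t, ht with
                | t + 1, ht =>
                  show (t + 1 + r) * rS r q (t + 1) + rS r q t = 0
                  rw [ihq (t + 1) (by omega), ihq t (by omega)]
                  simp
            exact this m (m + 1) (by omega)
          rw [show m + 1 + 1 = m + 2 from rfl, z2, z1]
          simp
      rw [this]
      simp [mul_comm, mul_left_comm]
    rw [h2, lhs1]
    ring

/-- rS vanishes above the diagonal. -/
lemma rS_eq_zero_of_lt_s14 (r : ℕ) : ∀ q t, q + 1 ≤ t → rS r q t = 0 := by
  intro q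
  induction q with
  | zero => intro t ht; match t, ht with
    | t + 1, _ => simp [rS]
  | succ q ihq =>
    intro t ht
    match t, ht with
    | t + 1, ht =>
      show (t + 1 + r) * rS r q (t + 1) + rS r q t = 0
      rw [ihq (t + 1) (by omega), ihq t (by omega)]
      simp

noncomputable def Econst : ℝ := ∑' m : ℕ, (1 : ℝ) / m.factorial

lemma summable_inv_factorial : Summable (fun m : ℕ => (1 : ℝ) / m.factorial) := by
  simpa using Real.summable_pow_div_factorial 1

lemma Econst_pos : 0 < Econst := by
  have h := summable_inv_factorial
  have h0 : (0:ℝ) < 1 / (Nat.factorial 0 : ℝ) := by norm_num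
  calc (0:ℝ) < 1 / (Nat.factorial 0 : ℝ) := h0
    _ ≤ Econst := Summable.le_tsum h 0 fun m _ => by positivity

lemma hasSum_descFactorial_div_factorial (j : ℕ) :
    HasSum (fun k : ℕ => (k.descFactorial j : ℝ) / k.factorial) Econst := by
  have hinj : Function.Injective fun m : ℕ => m + j := add_left_injective j
  have hzero : ∀ k ∉ Set.range (fun m : ℕ => m + j),
      (k.descFactorial j : ℝ) / k.factorial = 0 := by
    intro k hk
    have : k < j := by
      by_contra h
      exact hk ⟨k - j, by show k - j + j = k; omega⟩
    rw [Nat.descFactorial_eq_zero_iff_lt.2 this]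
    simp
  rw [← hinj.hasSum_iff hzero]
  have key : (fun k : ℕ => (k.descFactorial j : ℝ) / k.factorial) ∘ (fun m => m + j)
      = fun m : ℕ => (1 : ℝ) / m.factorial := by
    funext m
    show ((m + j).descFactorial j : ℝ) / (m + j).factorial = 1 / m.factorial
    have hfac : m.factorial * (m + j).descFactorial j = (m + j).factorial := by
      have := Nat.factorial_mul_descFactorial (show j ≤ m + j by omega)
      simpa [Nat.add_sub_cancel] using this
    have hfacR : ((m + j).factorial : ℝ) = m.factorial * (m + j).descFactorial j := by
      exact_mod_cast hfac.symm
    rw [hfacR]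
    have h1 : ((m + j).descFactorial j : ℝ) ≠ 0 := by
      have : (m + j).descFactorial j ≠ 0 := by
        intro h
        have := Nat.descFactorial_eq_zero_iff_lt.1 h
        omega
      exact_mod_cast this
    have h2 : (m.factorial : ℝ) ≠ 0 := by exact_mod_cast m.factorial_ne_zero
    field_simp
  rw [key]
  exact summable_inv_factorial.hasSum

lemma hasSum_moment (r m : ℕ) :
    HasSum (fun k : ℕ => ((k + r : ℕ) : ℝ) ^ m / k.factorial) (Econst * rBell r m) := by
  have hfun : (fun k : ℕ => ((k + r : ℕ) : ℝ) ^ m / k.factorial)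
      = fun k : ℕ => ∑ j ∈ range (m + 1),
          (rS r m j : ℝ) * ((k.descFactorial j : ℝ) / k.factorial) := by
    funext k
    have hc : ((k + r : ℕ) : ℝ) ^ m
        = ∑ j ∈ range (m + 1), (rS r m j : ℝ) * (k.descFactorial j : ℝ) := by
      exact_mod_cast congrArg (fun x : ℕ => (x : ℝ)) (rS_poly_nat r m k)
    rw [hc, Finset.sum_div]
    exact Finset.sum_congr rfl fun j _ => by ring
  rw [hfun]
  have h : HasSum
      (fun k : ℕ => ∑ j ∈ range (m + 1), (rS r m j : ℝ) * ((k.descFactorial j : ℝ) / k.factorial))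
      (∑ j ∈ range (m + 1), (rS r m j : ℝ) * Econst) :=
    hasSum_sum fun j _ => (hasSum_descFactorial_div_factorial j).mul_left _
  have hsum : ∑ j ∈ range (m + 1), (rS r m j : ℝ) * Econst = Econst * rBell r m := by
    rw [← Finset.sum_mul, rBell]
    push_cast
    ring
  rwa [hsum] at h

theorem rBell_log_convex (n r : ℕ) (hn : 1 ≤ n) :
    rBell r n ^ 2 ≤ rBell r (n - 1) * rBell r (n + 1) := by
  obtain ⟨m, rfl⟩ : ∃ m, n = m + 1 := ⟨n - 1, by omega⟩
  simp only [Nat.add_sub_cancel]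
  -- reduce to real inequality
  have key : (Econst * rBell r (m + 1)) ^ 2
      ≤ (Econst * rBell r m) * (Econst * rBell r (m + 2)) := by
    have hfin : ∀ N : ℕ, (∑ k ∈ range N, ((k + r : ℕ) : ℝ) ^ (m + 1) / k.factorial) ^ 2
        ≤ (∑ k ∈ range N, ((k + r : ℕ) : ℝ) ^ m / k.factorial)
          * (∑ k ∈ range N, ((k + r : ℕ) : ℝ) ^ (m + 2) / k.factorial) := by
      intro N
      refine Finset.sum_sq_le_sum_mul_sum_of_sq_eq_mul _ (fun k _ => ?_) (fun k _ => ?_)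
        (fun k _ => ?_)
      · positivity
      · positivity
      · show (((k + r : ℕ) : ℝ) ^ (m + 1) / k.factorial) ^ 2
          = (((k + r : ℕ) : ℝ) ^ m / k.factorial) * (((k + r : ℕ) : ℝ) ^ (m + 2) / k.factorial)
        ring
    have t1 := (hasSum_moment r (m + 1)).tendsto_sum_nat
    have t0 := (hasSum_moment r m).tendsto_sum_nat
    have t2 := (hasSum_moment r (m + 2)).tendsto_sum_nat
    exact le_of_tendsto_of_tendsto' (t1.pow 2) (t0.mul t2) hfin
  have hE2 : (0:ℝ) < Econst ^ 2 := pow_pos Econst_pos 2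
  have : (Econst ^ 2) * ((rBell r (m + 1) : ℝ) ^ 2)
      ≤ (Econst ^ 2) * ((rBell r m : ℝ) * (rBell r (m + 2) : ℝ)) := by
    nlinarith [key]
  have hreal : (rBell r (m + 1) : ℝ) ^ 2 ≤ (rBell r m : ℝ) * (rBell r (m + 2) : ℝ) :=
    le_of_mul_le_mul_left this hE2
  have : ((rBell r (m + 1) ^ 2 : ℕ) : ℝ) ≤ ((rBell r m * rBell r (m + 2) : ℕ) : ℝ) := by
    push_cast
    exact hreal
  exact (Nat.cast_le (α := ℝ)).mp this
end

section
/- For all n \ge 1 and r \ge 0, the r-Bell numbers satisfy the recurrence B_{n+1,r} = r B_{n,r} + B_{n,r+1}. -/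
lemma rS_zero_of_lt (r : ℕ) : ∀ n k, n < k → rS r n k = 0 := by
  intro n
  induction n with
  | zero =>
    intro k hk
    match k, hk with
    | k + 1, _ => rfl
  | succ n ih =>
    intro k hk
    match k, hk with
    | k + 1, hk =>
      show (k + 1 + r) * rS r n (k + 1) + rS r n k = 0
      rw [ih (k + 1) (by omega), ih k (by omega)]
      ring

lemma rS_succ_r (r : ℕ) : ∀ n k, rS (r + 1) n k = (k + 1) * rS r n (k + 1) + rS r n k := by
  intro n
  induction n with
  | zero =>
    intro k
    cases k with
    | zero => simp [rS]
    | succ k => simp [rS]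
  | succ n ih =>
    intro k
    cases k with
    | zero =>
      show (r + 1) * rS (r + 1) n 0 = 1 * rS r (n + 1) 1 + rS r (n + 1) 0
      rw [ih 0]
      show (r + 1) * (1 * rS r n 1 + rS r n 0) =
        1 * ((0 + 1 + r) * rS r n (0 + 1) + rS r n 0) + r * rS r n 0
      ring
    | succ k =>
      show (k + 1 + (r + 1)) * rS (r + 1) n (k + 1) + rS (r + 1) n k =
        (k + 1 + 1) * rS r (n + 1) (k + 1 + 1) + rS r (n + 1) (k + 1)
      rw [ih (k + 1), ih k]
      show (k + 1 + (r + 1)) * ((k + 1 + 1) * rS r n (k + 1 + 1) + rS r n (k + 1)) +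
          ((k + 1) * rS r n (k + 1) + rS r n k) =
        (k + 1 + 1) * ((k + 1 + 1 + r) * rS r n (k + 1 + 1) + rS r n (k + 1)) +
          ((k + 1 + r) * rS r n (k + 1) + rS r n k)
      ring

theorem rBell_recurrence (n r : ℕ) (hn : 1 ≤ n) :
    rBell r (n + 1) = r * rBell r n + rBell (r + 1) n := by
  unfold rBell
  rw [Finset.sum_range_succ' (fun k => rS r (n + 1) k) (n + 1)]
  have hrec : ∀ k, rS r (n + 1) (k + 1) = (k + 1 + r) * rS r n (k + 1) + rS r n k :=
    fun k => rfl
  have h0 : rS r (n + 1) 0 = r * rS r n 0 := rfl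
  simp only [hrec, h0, rS_succ_r]
  rw [Finset.sum_add_distrib, Finset.sum_add_distrib]
  have hsplit : ∀ k, (k + 1 + r) * rS r n (k + 1) =
      (k + 1) * rS r n (k + 1) + r * rS r n (k + 1) := fun k => by ring
  simp only [hsplit]
  rw [Finset.sum_add_distrib]
  have key : ∑ k ∈ Finset.range (n + 1), rS r n (k + 1) + rS r n 0 =
      ∑ k ∈ Finset.range (n + 1), rS r n k := by
    have h1 := Finset.sum_range_succ' (fun k => rS r n k) (n + 1)
    have h2 := Finset.sum_range_succ (fun k => rS r n k) (n + 1)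
    rw [rS_zero_of_lt r n (n + 1) (by omega), add_zero] at h2
    rw [← h2, h1]
  have key2 : ∑ k ∈ Finset.range (n + 1), r * rS r n (k + 1) + r * rS r n 0 =
      r * ∑ k ∈ Finset.range (n + 1), rS r n k := by
    rw [← key, mul_add, Finset.mul_sum]
  linarith [key2]
end

section
/- For nonnegative integers j and positive integers n, \mathrm{Im} \int_0^\pi e^{j e^{i\theta}} \sin(n\theta)\, d\theta = \frac{\pi}{2} \frac{j^n}{n!}. -/
open Complex Nat
open scoped Real

theorem integral_cos_int_mul_eq_ite (k : ℤ) :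
    ∫ θ in (0:ℝ)..π, Real.cos (k * θ) = if k = 0 then π else 0 := by
  split_ifs with hk
  · simp [hk]
  · rw [intervalIntegral.integral_comp_mul_left Real.cos (by exact_mod_cast hk)]
    simp [integral_cos, Real.sin_int_mul_pi]

theorem integral_sin_nat_mul_mul_sin_nat_mul (m : ℕ) {n : ℕ} (hn : n ≠ 0) :
    ∫ θ in (0:ℝ)..π, Real.sin (m * θ) * Real.sin (n * θ) = if m = n then π / 2 else 0 := by
  have product_to_sum : ∀ θ : ℝ, Real.sin (m * θ) * Real.sin (n * θ) =
      (Real.cos (((m - n : ℤ) : ℝ) * θ) - Real.cos (((m + n : ℤ) : ℝ) * θ)) / 2 := by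
    intro θ
    push_cast
    rw [sub_mul, add_mul, Real.cos_sub, Real.cos_add]
    ring
  have hcont : ∀ k : ℤ, IntervalIntegrable (fun θ => Real.cos (k * θ)) MeasureTheory.volume 0 π :=
    fun k => (by fun_prop : Continuous fun θ : ℝ => Real.cos (k * θ)).intervalIntegrable _ _
  simp_rw [product_to_sum]
  rw [intervalIntegral.integral_div, intervalIntegral.integral_sub (hcont _) (hcont _),
    integral_cos_int_mul_eq_ite, integral_cos_int_mul_eq_ite,
    if_neg (show (m + n : ℤ) ≠ 0 by omega)]
  simp only [sub_eq_zero, Nat.cast_inj]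
  split_ifs <;> ring

theorem im_ofReal_mul_exp_mul_I_pow (x θ : ℝ) (m : ℕ) :
    (((x : ℂ) * exp (θ * I)) ^ m).im = x ^ m * Real.sin (m * θ) := by
  rw [mul_pow, ← Complex.exp_nat_mul, ← ofReal_pow,
    show (m : ℂ) * (θ * I) = ((m * θ : ℝ) : ℂ) * I by push_cast; ring,
    im_ofReal_mul, exp_ofReal_mul_I_im]

theorem hasSum_intervalIntegral_exp_mul {u g : ℝ → ℂ} (hu : Continuous u) (hg : Continuous g)
    (a b : ℝ) :
    HasSum (fun m : ℕ => ∫ θ in a..b, u θ ^ m / m ! * g θ) (∫ θ in a..b, exp (u θ) * g θ) := by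
  have bound_hasSum : ∀ θ, HasSum (fun m : ℕ => ‖u θ‖ ^ m / m ! * ‖g θ‖) (Real.exp ‖u θ‖ * ‖g θ‖) :=
    fun θ => by
      simpa [Real.exp_eq_exp_ℝ] using (NormedSpace.expSeries_div_hasSum_exp ‖u θ‖).mul_right ‖g θ‖
  refine intervalIntegral.hasSum_integral_of_dominated_convergence
    (fun m θ => ‖u θ‖ ^ m / m ! * ‖g θ‖) (fun m => by fun_prop) (fun m => ?_)
    (.of_forall fun θ _ => (bound_hasSum θ).summable) ?_
    (.of_forall fun θ _ => ?_)
  · refine .of_forall fun θ _ => ?_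
    simp [norm_pow]
  · simp_rw [fun θ => (bound_hasSum θ).tsum_eq]
    exact (by fun_prop : Continuous fun θ => Real.exp ‖u θ‖ * ‖g θ‖).intervalIntegrable _ _
  · simpa [exp_eq_exp_ℂ] using (NormedSpace.expSeries_div_hasSum_exp (u θ)).mul_right (g θ)

theorem im_intervalIntegral_ofReal_mul_exp_pow_mul_sin (x : ℝ) (m : ℕ) {n : ℕ} (hn : n ≠ 0) :
    (∫ θ in (0:ℝ)..π, ((x : ℂ) * exp (θ * I)) ^ m / m ! * (Real.sin (n * θ) : ℂ)).im =
      if m = n then x ^ n / n ! * (π / 2) else 0 := by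
  rw [← imCLM_apply, ← ContinuousLinearMap.intervalIntegral_comp_comm _
    (Continuous.intervalIntegrable (by fun_prop) _ _)]
  have pointwise : ∀ θ : ℝ,
      (((x : ℂ) * exp (θ * I)) ^ m / m ! * (Real.sin (n * θ) : ℂ)).im =
        x ^ m / m ! * (Real.sin (m * θ) * Real.sin (n * θ)) := fun θ => by
    rw [im_mul_ofReal, div_natCast_im, im_ofReal_mul_exp_mul_I_pow]
    ring
  simp only [imCLM_apply, pointwise, intervalIntegral.integral_const_mul,
    integral_sin_nat_mul_mul_sin_nat_mul m hn]
  split_ifs with h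
  · rw [h]
  · rw [mul_zero]

open Complex in
theorem callan_integral (j n : ℕ) (hn : 1 ≤ n) :
    (∫ θ in (0:ℝ)..Real.pi,
        Complex.exp ((j : ℂ) * Complex.exp (θ * I)) * (Real.sin (n * θ) : ℂ)).im =
      Real.pi / 2 * (j : ℝ) ^ n / (n.factorial : ℝ) := by
  have series := imCLM.hasSum <| hasSum_intervalIntegral_exp_mul
    (u := fun θ : ℝ => (j : ℂ) * exp (θ * I)) (g := fun θ : ℝ => (Real.sin (n * θ) : ℂ))
    (by fun_prop) (by fun_prop) 0 π
  have terms : ∀ m : ℕ, imCLM (∫ θ in (0:ℝ)..π, ((j : ℂ) * exp (θ * I)) ^ m / m ! *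
      (Real.sin (n * θ) : ℂ)) = if m = n then (j : ℝ) ^ n / n ! * (π / 2) else 0 := fun m => by
    simpa using im_intervalIntegral_ofReal_mul_exp_pow_mul_sin j m (n := n) (by omega)
  simp only [terms] at series
  rw [← imCLM_apply, series.unique (hasSum_ite_eq n _)]
  ring
end
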